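/- Define H_n and G_n as rational functions of v as above. Then H_n(v) = ∑_{k=0}^n ((2k+1) n!)/((n+k+1)!(n-k)!) · G_k(v) for all real v. -/

import Mathlib

open Complex Finset

noncomputable def HIOU (n : ℕ) (v : ℝ) : ℂ :=
  ∏ k ∈ Finset.range (n + 1), ((k : ℂ) + 1 / 2 + Complex.I * v)⁻¹

noncomputable def GIOU (n : ℕ) (v : ℝ) : ℂ :=
  (∏ k ∈ Finset.range n, ((k : ℂ) + 1 / 2 - Complex.I * v)) /
    (∏ k ∈ Finset.range (n + 1), ((k : ℂ) + 1 / 2 + Complex.I * v))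

noncomputable def Acl (v : ℝ) (j : ℕ) : ℂ := (j : ℂ) + 1 / 2 + Complex.I * v

noncomputable def Bcl (v : ℝ) (j : ℕ) : ℂ := (j : ℂ) + 1 / 2 - Complex.I * v

noncomputable def Ccoef (n k : ℕ) : ℂ :=
  ((2 * k + 1 : ℕ) : ℂ) * (n.factorial : ℂ) /
    (((n + k + 1).factorial : ℂ) * ((n - k).factorial : ℂ))

noncomputable def Ecoef (n k : ℕ) : ℂ :=
  -(k : ℂ) * (n.factorial : ℂ) /
    (((n + k + 1).factorial : ℂ) * ((n + 1 - k).factorial : ℂ))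

noncomputable def U (v : ℝ) (n k : ℕ) : ℂ :=
  (∏ j ∈ Finset.range k, Bcl v j) * ∏ j ∈ Finset.Ico (k + 1) (n + 1), Acl v j

lemma Acl_ne_zero (v : ℝ) (j : ℕ) : Acl v j ≠ 0 := by
  intro h
  have hre : (Acl v j).re = (j : ℝ) + 1 / 2 := by
    simp [Acl]
  rw [h] at hre
  simp at hre
  have : (0:ℝ) ≤ (j:ℝ) := by positivity
  linarith

lemma scalar_key (n k : ℕ) (hk : k ≤ n) (v : ℝ) :
    Ccoef (n + 1) k * Acl v (n + 1) =
      Ccoef n k + Ecoef n (k + 1) * Bcl v k - Ecoef n k * Acl v k := by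
  obtain ⟨m, rfl⟩ : ∃ m, n = k + m := ⟨n - k, by omega⟩
  have h1 : k + m + 1 - k = m + 1 := by omega
  have h2 : k + m - k = m := by omega
  have h3 : k + m + 1 + k + 1 = (k + m + k + 1) + 1 := by omega
  have h4 : k + m + (k + 1) + 1 = (k + m + k + 1) + 1 := by omega
  have h5 : k + m + 1 - (k + 1) = m := by omega
  rw [Ccoef, Ccoef, Ecoef, Ecoef, h1, h2, h3, h4, h5]
  have n1 : ((k + m + k + 1).factorial : ℂ) ≠ 0 :=
    Nat.cast_ne_zero.mpr (Nat.factorial_ne_zero _)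
  have n2 : (m.factorial : ℂ) ≠ 0 :=
    Nat.cast_ne_zero.mpr (Nat.factorial_ne_zero _)
  have n3 : ((k + m + k + 2 : ℕ) : ℂ) ≠ 0 := Nat.cast_ne_zero.mpr (by omega)
  have n4 : ((m + 1 : ℕ) : ℂ) ≠ 0 := Nat.cast_ne_zero.mpr (by omega)
  set F1 := ((k + m + k + 1).factorial : ℂ) with hF1
  set F2 := ((k + m).factorial : ℂ) with hF2
  set F3 := (m.factorial : ℂ) with hF3
  set D := ((k + m + k + 2 : ℕ) : ℂ) * F1 * (((m + 1 : ℕ) : ℂ) * F3) with hD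
  have hDne : D ≠ 0 := by
    rw [hD]; exact mul_ne_zero (mul_ne_zero n3 n1) (mul_ne_zero n4 n2)
  have e1 : (((k + m + k + 1) + 1).factorial : ℂ) = ((k + m + k + 2 : ℕ) : ℂ) * F1 := by
    rw [hF1, Nat.factorial_succ]; push_cast; ring
  have e2 : (((k + m) + 1).factorial : ℂ) = ((k + m + 1 : ℕ) : ℂ) * F2 := by
    rw [hF2, Nat.factorial_succ]; push_cast; ring
  have e3 : ((m + 1).factorial : ℂ) = ((m + 1 : ℕ) : ℂ) * F3 := by
    rw [hF3, Nat.factorial_succ]; push_cast; ring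
  rw [e1, e2, e3]
  rw [div_mul_eq_mul_div, div_mul_eq_mul_div, div_mul_eq_mul_div]
  have r2 : ((2 * k + 1 : ℕ) : ℂ) * F2 / (F1 * F3)
      = ((2 * k + 1 : ℕ) : ℂ) * F2 * (((k + m + k + 2 : ℕ) : ℂ) * ((m + 1 : ℕ) : ℂ)) / D := by
    rw [div_eq_div_iff (mul_ne_zero n1 n2) hDne, hD]; ring
  have r3 : ((-((k + 1 : ℕ) : ℂ))) * F2 * Bcl v k / (((k + m + k + 2 : ℕ) : ℂ) * F1 * F3)
      = ((-((k + 1 : ℕ) : ℂ))) * F2 * Bcl v k * ((m + 1 : ℕ) : ℂ) / D := by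
    rw [div_eq_div_iff (mul_ne_zero (mul_ne_zero n3 n1) n2) hDne, hD]; ring
  have r4 : -(k : ℂ) * F2 * Acl v k / (F1 * (((m + 1 : ℕ) : ℂ) * F3))
      = -(k : ℂ) * F2 * Acl v k * ((k + m + k + 2 : ℕ) : ℂ) / D := by
    rw [div_eq_div_iff (mul_ne_zero n1 (mul_ne_zero n4 n2)) hDne, hD]; ring
  rw [r2, r3, r4]
  have goal2 : ((2 * k + 1 : ℕ) : ℂ) * (((k + m + 1 : ℕ) : ℂ) * F2) * Acl v (k + m + 1)
      / (((k + m + k + 2 : ℕ) : ℂ) * F1 * (((m + 1 : ℕ) : ℂ) * F3))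
      = (((2 * k + 1 : ℕ) : ℂ) * F2 * (((k + m + k + 2 : ℕ) : ℂ) * ((m + 1 : ℕ) : ℂ))
          + (((-((k + 1 : ℕ) : ℂ))) * F2 * Bcl v k * ((m + 1 : ℕ) : ℂ))
          - (-(k : ℂ) * F2 * Acl v k * ((k + m + k + 2 : ℕ) : ℂ))) / D := by
    rw [hD, div_eq_div_iff (mul_ne_zero (mul_ne_zero n3 n1) (mul_ne_zero n4 n2))
      (mul_ne_zero (mul_ne_zero n3 n1) (mul_ne_zero n4 n2))]
    rw [Acl, Acl, Bcl]
    push_cast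
    ring
  rw [goal2, ← add_div, div_sub_div_same]

lemma main_sum (n : ℕ) (v : ℝ) :
    ∑ k ∈ Finset.range (n + 1), Ccoef n k * U v n k = 1 := by
  induction n with
  | zero =>
      simp [Ccoef, U, Nat.factorial]
  | succ n ih =>
      -- telescoping function
      set f : ℕ → ℂ := fun k =>
        Ecoef n k * ((∏ j ∈ Finset.range k, Bcl v j) *
          ∏ j ∈ Finset.Ico k (n + 1), Acl v j) with hf
      have step : ∀ k ∈ Finset.range (n + 1),
          Ccoef (n + 1) k * U v (n + 1) k
            = Ccoef n k * U v n k + (f (k + 1) - f k) := by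
        intro k hk
        rw [Finset.mem_range] at hk
        have hk' : k ≤ n := by omega
        have hU : U v (n + 1) k = U v n k * Acl v (n + 1) := by
          rw [U, U, Finset.prod_Ico_succ_top (by omega : k + 1 ≤ n + 1)]
          ring
        have hfk : f k = Ecoef n k * Acl v k * U v n k := by
          simp only [hf, U]
          rw [Finset.prod_eq_prod_Ico_succ_bot (by omega : k < n + 1)]
          ring
        have hfk1 : f (k + 1) = Ecoef n (k + 1) * Bcl v k * U v n k := by
          simp only [hf, U]
          rw [Finset.prod_range_succ]
          ring
        rw [hU, hfk, hfk1]
        have := scalar_key n k hk' v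
        calc Ccoef (n + 1) k * (U v n k * Acl v (n + 1))
            = (Ccoef (n + 1) k * Acl v (n + 1)) * U v n k := by ring
          _ = (Ccoef n k + Ecoef n (k + 1) * Bcl v k - Ecoef n k * Acl v k) * U v n k := by
              rw [this]
          _ = _ := by ring
      have last : Ccoef (n + 1) (n + 1) * U v (n + 1) (n + 1) = -f (n + 1) := by
        have hU : U v (n + 1) (n + 1) = ∏ j ∈ Finset.range (n + 1), Bcl v j := by
          rw [U, Finset.Ico_self, Finset.prod_empty, mul_one]
        have hfv : f (n + 1) = Ecoef n (n + 1) * ∏ j ∈ Finset.range (n + 1), Bcl v j := by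
          simp only [hf]
          rw [Finset.Ico_self, Finset.prod_empty]
          ring
        rw [hU, hfv]
        have hC : Ccoef (n + 1) (n + 1) = -Ecoef n (n + 1) := by
          rw [Ccoef, Ecoef]
          have h1 : n + 1 - (n + 1) = 0 := by omega
          have h2 : n + 1 + (n + 1) + 1 = (n + (n + 1) + 1) + 1 := by omega
          rw [h1, h2, Nat.factorial_zero]
          have e1 : (((n + (n + 1) + 1) + 1).factorial : ℂ) =
              ((n + (n + 1) + 2 : ℕ) : ℂ) * ((n + (n + 1) + 1).factorial : ℂ) := by
            rw [Nat.factorial_succ]; push_cast; ring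
          have e2 : ((n + 1).factorial : ℂ) = ((n + 1 : ℕ) : ℂ) * (n.factorial : ℂ) := by
            rw [Nat.factorial_succ]; push_cast; ring
          rw [e1, e2]
          have n1 : ((n + (n + 1) + 1).factorial : ℂ) ≠ 0 :=
            Nat.cast_ne_zero.mpr (Nat.factorial_ne_zero _)
          have n3 : ((n + (n + 1) + 2 : ℕ) : ℂ) ≠ 0 := Nat.cast_ne_zero.mpr (by omega)
          simp only [Nat.cast_one, mul_one, neg_mul, neg_div, neg_neg]
          rw [div_eq_div_iff (by exact mul_ne_zero n3 n1) n1]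
          push_cast
          ring
        rw [hC]
        ring
      rw [Finset.sum_range_succ, Finset.sum_congr rfl step, Finset.sum_add_distrib, ih,
        Finset.sum_range_sub f, last]
      have hf0 : f 0 = 0 := by
        simp [hf, Ecoef]
      rw [hf0]
      ring

/-- `H_n = ∑_{k=0}^n ((2k+1) n!)/((n+k+1)!(n-k)!) · G_k`. -/
theorem stmt_9 (n : ℕ) (v : ℝ) :
    HIOU n v = ∑ k ∈ Finset.range (n + 1),
      (((2 * k + 1 : ℕ) : ℂ) * (n.factorial : ℂ) /
        (((n + k + 1).factorial : ℂ) * ((n - k).factorial : ℂ))) * GIOU k v := by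
  have hA : ∀ m : ℕ, (∏ j ∈ Finset.range m, Acl v j) ≠ 0 :=
    fun m => Finset.prod_ne_zero_iff.mpr (fun j _ => Acl_ne_zero v j)
  have hG : ∀ k, k ≤ n → GIOU k v = U v n k / ∏ j ∈ Finset.range (n + 1), Acl v j := by
    intro k hk
    have hsplit : (∏ j ∈ Finset.range (n + 1), Acl v j)
        = (∏ j ∈ Finset.range (k + 1), Acl v j) * ∏ j ∈ Finset.Ico (k + 1) (n + 1), Acl v j := by
      rw [Finset.prod_range_mul_prod_Ico _ (by omega : k + 1 ≤ n + 1)]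
    have hB : (∏ j ∈ Finset.range k, ((j : ℂ) + 1 / 2 - Complex.I * v))
        = ∏ j ∈ Finset.range k, Bcl v j :=
      Finset.prod_congr rfl fun j _ => rfl
    have hA' : (∏ j ∈ Finset.range (k + 1), ((j : ℂ) + 1 / 2 + Complex.I * v))
        = ∏ j ∈ Finset.range (k + 1), Acl v j :=
      Finset.prod_congr rfl fun j _ => rfl
    have h2 : (∏ j ∈ Finset.Ico (k + 1) (n + 1), Acl v j) ≠ 0 :=
      Finset.prod_ne_zero_iff.mpr (fun j _ => Acl_ne_zero v j)
    rw [GIOU, hB, hA', U, hsplit,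
      div_eq_div_iff (hA (k + 1)) (mul_ne_zero (hA (k + 1)) h2)]
    ring
  have hH : HIOU n v = (∏ j ∈ Finset.range (n + 1), Acl v j)⁻¹ := by
    rw [HIOU, ← Finset.prod_inv_distrib]
    exact Finset.prod_congr rfl fun j _ => by rw [Acl]
  calc HIOU n v = (∏ j ∈ Finset.range (n + 1), Acl v j)⁻¹ := hH
    _ = (∑ k ∈ Finset.range (n + 1), Ccoef n k * U v n k) /
          ∏ j ∈ Finset.range (n + 1), Acl v j := by
        rw [main_sum]
        exact (one_div _).symm
    _ = ∑ k ∈ Finset.range (n + 1), Ccoef n k *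
          (U v n k / ∏ j ∈ Finset.range (n + 1), Acl v j) := by
        rw [Finset.sum_div]
        exact Finset.sum_congr rfl fun k _ => by ring
    _ = _ := by
        refine Finset.sum_congr rfl fun k hk => ?_
        rw [Finset.mem_range] at hk
        rw [hG k (by omega), Ccoef]
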